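/- On D([0,T], S_m) with the Skorohod metric, the number-of-visits functionals N_k (the number of maximal constancy intervals on which the trajectory equals k), 1 ≤ k ≤ m, are continuous, and for each j, ℓ and a > 0 the set {x : T_{j,ℓ}(x) ≥ a} is closed, where T_{j,ℓ}(x) denotes the length of the ℓ-th holding interval at state j (set to 0 if ℓ > N_j(x)). -/

import Mathlib

open Filter Topology Set

noncomputable section
theorem forall_pos_exists_mem_Ioo_inter_Icc_iff {T t : ℝ} {Q : ℝ → Prop} (ht : t ∈ Ioc 0 T) :
    (∀ δ > 0, ∃ s ∈ Ioo (t - δ) t ∩ Icc 0 T, Q s) ↔ ∀ a ∈ Icc 0 T, a < t → ∃ s ∈ Ioo a t, Q s := by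
  constructor
  · intro h a _ hat
    obtain ⟨s, ⟨hs, -⟩, hQ⟩ := h (t - a) (sub_pos.2 hat)
    exact ⟨s, by rwa [sub_sub_cancel] at hs, hQ⟩
  · intro h δ hδ
    obtain ⟨s, hs, hQ⟩ := h (max (t - δ) 0)
      ⟨le_max_right _ _, max_le (by linarith [ht.2]) (ht.1.le.trans ht.2)⟩
      (max_lt (by linarith) ht.1)
    exact ⟨s, ⟨⟨(le_max_left _ _).trans_lt hs.1, hs.2⟩,
      (le_max_right _ _).trans hs.1.le, hs.2.le.trans ht.2⟩, hQ⟩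

namespace Soft

abbrev Sd := ℕ∞

noncomputable def sval (k : Sd) : ℝ := if k = ⊤ then 0 else 1 / ((k.toNat : ℝ) + 1)

noncomputable def sdist (k j : Sd) : ℝ := |sval k - sval j|

/-- left-limit filter within `[0,T]` -/
def lf (T t : ℝ) : Filter ℝ := 𝓝[Set.Icc 0 T ∩ Set.Iio t] t

/-- right-limit filter within `[0,T]` -/
def rf (T t : ℝ) : Filter ℝ := 𝓝[Set.Icc 0 T ∩ Set.Ioi t] t

def leftLim (T : ℝ) (x : ℝ → Sd) (t : ℝ) (L : Sd) : Prop := Tendsto x (lf T t) (𝓝 L)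

def rightLim (T : ℝ) (x : ℝ → Sd) (t : ℝ) (L : Sd) : Prop := Tendsto x (rf T t) (𝓝 L)

/-- the set of cluster points of `x(s)`, `s ↑ t`, is exactly the pair `{n, ∞}` -/
def softLeftPair (T : ℝ) (x : ℝ → Sd) (t : ℝ) (n : ℕ) : Prop :=
  {L : Sd | MapClusterPt L (lf T t) x} = {(n : Sd), ⊤}

def softRightPair (T : ℝ) (x : ℝ → Sd) (t : ℝ) (n : ℕ) : Prop :=
  {L : Sd | MapClusterPt L (rf T t) x} = {(n : Sd), ⊤}

/-- `x` has a soft left-limit at `t` -/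
def softLeftLim (T : ℝ) (x : ℝ → Sd) (t : ℝ) : Prop :=
  (∃ L, leftLim T x t L) ∨ ∃ n : ℕ, softLeftPair T x t n

/-- `x` is soft right-continuous at `t` -/
def softRightCont (T : ℝ) (x : ℝ → Sd) (t : ℝ) : Prop :=
  rightLim T x t ⊤ ∨ (∃ n : ℕ, rightLim T x t (n : Sd) ∧ x t = (n : Sd)) ∨
    ∃ n : ℕ, softRightPair T x t n ∧ x t = (n : Sd)

/-- the space `𝔼([0,T], S_d)` of soft right-continuous trajectories with soft left-limits -/
def memBbE (T : ℝ) (x : ℝ → Sd) : Prop :=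
  (∀ t ∈ Set.Icc 0 T, softRightCont T x t) ∧ ∀ t ∈ Set.Ioc 0 T, softLeftLim T x t

/-- time of last visit before `t` to the set `{k : P k}` (with the convention `= 0`
if there is no such visit, since `sSup ∅ = 0` in `ℝ`) -/
def lastVisit (P : Sd → Prop) (x : ℝ → Sd) (t : ℝ) : ℝ :=
  sSup {s | s ∈ Set.Icc 0 t ∧ P (x s)}

open Classical in
/-- the record operator: the last value in `{k : P k}` visited by `x` before time `t`;
equal to the bottom state `0` before the first visit -/
noncomputable def srec (T : ℝ) (P : Sd → Prop) (x : ℝ → Sd) (t : ℝ) : Sd :=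
  if ∃ s ∈ Set.Icc 0 t, P (x s) then
    if P (x (lastVisit P x t)) then x (lastVisit P x t)
    else if h : ∃ L, leftLim T x (lastVisit P x t) L then h.choose
    else if h2 : ∃ n : ℕ, softLeftPair T x (lastVisit P x t) n then (h2.choose : Sd)
    else 0
  else 0

/-- `R_m`, the operator recording the last site visited in `S_m = {0,…,m}` -/
noncomputable def Rm (T : ℝ) (m : ℕ) (x : ℝ → Sd) : ℝ → Sd :=
  srec T (fun k => k ≤ (m : Sd)) x

/-- `R_∞`, the operator recording the last site visited in `ℕ` -/
noncomputable def Rinf (T : ℝ) (x : ℝ → Sd) : ℝ → Sd := srec T (fun k => k ≠ ⊤) x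

/-- `σ_∞(t)`, the time of the last visit to `ℕ` before `t` -/
def sigmaInf (x : ℝ → Sd) (t : ℝ) : ℝ := lastVisit (fun k => k ≠ ⊤) x t

/-- `D([0,T], S_m)`: càdlàg trajectories with values in `S_m = {0,…,m}` -/
def memD (T : ℝ) (m : ℕ) (x : ℝ → Sd) : Prop :=
  (∀ t ∈ Set.Icc 0 T, x t ≤ (m : Sd)) ∧
  (∀ t ∈ Set.Ico 0 T, rightLim T x t (x t)) ∧
  ∀ t ∈ Set.Ioc 0 T, ∃ L, leftLim T x t L

/-- `D([0,T], S_d)`: càdlàg trajectories with values in `S_d` -/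
def memDd (T : ℝ) (x : ℝ → Sd) : Prop :=
  (∀ t ∈ Set.Ico 0 T, rightLim T x t (x t)) ∧
  ∀ t ∈ Set.Ioc 0 T, ∃ L, leftLim T x t L

/-- the space `E([0,T], S_d)` -/
def memE (T : ℝ) (x : ℝ → Sd) : Prop :=
  memBbE T x ∧ x 0 ≠ ⊤ ∧
  ∀ t ∈ Set.Ioc 0 T, x t = ⊤ →
    0 < sigmaInf x t ∧ x (sigmaInf x t) = ⊤ ∧ leftLim T x (sigmaInf x t) ⊤

/-- `Λ_T(x)`, the time spent at `∞` -/
noncomputable def LambdaT (T : ℝ) (x : ℝ → Sd) : ℝ :=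
  (MeasureTheory.volume {s | s ∈ Set.Icc 0 T ∧ x s = ⊤}).toReal

/-- `D^*([0,T], S_d)`: càdlàg trajectories spending no time at `∞`, continuous at `T` -/
def memDstar (T : ℝ) (x : ℝ → Sd) : Prop :=
  memDd T x ∧ LambdaT T x = 0 ∧ leftLim T x T (x T)

/-- `E^*([0,T], S_d)`: the image of `D^*([0,T], S_d)` under `R_∞` -/
def memEstar (T : ℝ) (x : ℝ → Sd) : Prop :=
  memE T x ∧ ∃ y, memDstar T y ∧ Set.EqOn (Rinf T y) x (Set.Icc 0 T)

/-- the set `Λ` of time changes: increasing continuous bijections of `[0,T]` fixing `0, T` -/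
def TimeChange (T : ℝ) (l : ℝ → ℝ) : Prop :=
  l 0 = 0 ∧ l T = T ∧ ContinuousOn l (Set.Icc 0 T) ∧ StrictMonoOn l (Set.Icc 0 T) ∧
    Set.MapsTo l (Set.Icc 0 T) (Set.Icc 0 T)

/-- the Skorohod metric -/
noncomputable def dS (T : ℝ) (x y : ℝ → Sd) : ℝ :=
  sInf {a : ℝ | ∃ l, TimeChange T l ∧
    (∀ t ∈ Set.Icc 0 T, sdist (x t) (y (l t)) ≤ a) ∧
    ∀ s ∈ Set.Icc 0 T, ∀ t ∈ Set.Icc 0 T, s < t → |Real.log ((l t - l s) / (t - s))| ≤ a}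

/-- the soft metric `d(x,y) = Σ_m 2^{-(m+1)} d_S(R_m x, R_m y)` -/
noncomputable def dE (T : ℝ) (x y : ℝ → Sd) : ℝ :=
  ∑' m : ℕ, (1 / 2 : ℝ) ^ (m + 1) * dS T (Rm T m x) (Rm T m y)

/-- the left endpoints of the maximal intervals on which `x = j` -/
def entryPoints (T : ℝ) (j : Sd) (x : ℝ → Sd) : Set ℝ :=
  {t | t ∈ Set.Icc 0 T ∧ x t = j ∧
    (t = 0 ∨ ∀ δ > 0, ∃ s ∈ Set.Ioo (t - δ) t ∩ Set.Icc 0 T, x s ≠ j)}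

/-- `N_j(x)`, the number of visits of `x` to `j` -/
noncomputable def Nvisits (T : ℝ) (j : Sd) (x : ℝ → Sd) : ℕ := (entryPoints T j x).ncard

/-- the start of the `(l+1)`-th visit to `j` (0-indexed) -/
noncomputable def nthEntry (T : ℝ) (j : Sd) (x : ℝ → Sd) (l : ℕ) : ℝ :=
  sInf {e | e ∈ entryPoints T j x ∧ {s | s ∈ entryPoints T j x ∧ s < e}.ncard = l}

noncomputable def exitTime (T : ℝ) (j : Sd) (x : ℝ → Sd) (t : ℝ) : ℝ :=
  sInf ({s | s ∈ Set.Ioc t T ∧ x s ≠ j} ∪ {T})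

/-- `T_{j,l}(x)`, the length of the `l`-th holding interval at `j` (1-indexed),
`0` if `l > N_j(x)` -/
noncomputable def holdingTime (T : ℝ) (j : Sd) (x : ℝ → Sd) (l : ℕ) : ℝ :=
  if 1 ≤ l ∧ l ≤ Nvisits T j x then
    exitTime T j x (nthEntry T j x (l - 1)) - nthEntry T j x (l - 1)
  else 0

end Soft

/-!
Two trajectories of `D([0,T], S_m)` whose Skorohod distance is below `(m+1)⁻²`, a lower bound
for the distance between two distinct states of `S_m`, differ by a time change only: `u = x ∘ λ` on `[0,T]`.
A time change is an increasing homeomorphism of `[0,T]`, so it maps the entry points of `u`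
bijectively and in order onto those of `x`, which gives `N_k(u) = N_k(x)`, and it maps the
`ℓ`-th holding interval `[e, f)` of `u` at `j` onto that of `x`. If `λ` has log-slopes bounded
by `ε`, then `T_{j,ℓ}(x) = λ f - λ e ≥ e^{-ε} (f - e) = e^{-ε} T_{j,ℓ}(u)`; letting `ε → 0`
gives the closedness of `{T_{j,ℓ} ≥ a}`.
-/

theorem StrictMonoOn.image_setOf_ncard_lt {α β : Type*} [LinearOrder α] [Preorder β]
    {f : α → β} {S : Set α} (hf : StrictMonoOn f S) (k : ℕ) :
    f '' {e | e ∈ S ∧ {s | s ∈ S ∧ s < e}.ncard = k} =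
      {e | e ∈ f '' S ∧ {s | s ∈ f '' S ∧ s < e}.ncard = k} := by
  have hbelow : ∀ e ∈ S, {s | s ∈ f '' S ∧ s < f e} = f '' {s | s ∈ S ∧ s < e} := by
    intro e he
    ext s'
    constructor
    · rintro ⟨⟨s, hs, rfl⟩, hlt⟩
      exact ⟨s, ⟨hs, (hf.lt_iff_lt hs he).1 hlt⟩, rfl⟩
    · rintro ⟨s, ⟨hs, hlt⟩, rfl⟩
      exact ⟨mem_image_of_mem f hs, hf hs he hlt⟩
  have hinj : ∀ e, InjOn f {s | s ∈ S ∧ s < e} := fun e => hf.injOn.mono fun _ h => h.1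
  ext e'
  constructor
  · rintro ⟨e, ⟨he, hk⟩, rfl⟩
    exact ⟨mem_image_of_mem f he, by rw [hbelow e he, (hinj e).ncard_image, hk]⟩
  · rintro ⟨⟨e, he, rfl⟩, hk⟩
    rw [hbelow e he, (hinj e).ncard_image] at hk
    exact ⟨e, ⟨he, hk⟩, rfl⟩

theorem Real.exp_neg_mul_sub_le_of_abs_log_le {s t a b ε : ℝ} (hst : s < t) (hab : a < b)
    (h : |Real.log ((b - a) / (t - s))| ≤ ε) : Real.exp (-ε) * (t - s) ≤ b - a := by
  have hr : 0 < (b - a) / (t - s) := div_pos (sub_pos.2 hab) (sub_pos.2 hst)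
  rw [← le_div_iff₀ (sub_pos.2 hst)]
  calc Real.exp (-ε) ≤ Real.exp (Real.log ((b - a) / (t - s))) :=
        Real.exp_le_exp.2 (neg_le_of_abs_le h)
    _ = (b - a) / (t - s) := Real.exp_log hr

theorem Real.le_of_forall_pos_exp_neg_mul_le {a b : ℝ} (h : ∀ ε > 0, Real.exp (-ε) * a ≤ b) :
    a ≤ b := by
  have hlim : Tendsto (fun ε => Real.exp (-ε) * a) (𝓝[>] 0) (𝓝 a) := by
    have hcont : Continuous fun ε => Real.exp (-ε) * a := by fun_prop
    simpa using (hcont.tendsto 0).mono_left nhdsWithin_le_nhds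
  exact le_of_tendsto hlim (eventually_nhdsWithin_of_forall h)

theorem Real.sInf_mem_Icc_of_subset {A : Set ℝ} {T : ℝ} (hT : 0 ≤ T) (hA : A ⊆ Icc 0 T) :
    sInf A ∈ Icc 0 T := by
  rcases A.eq_empty_or_nonempty with rfl | ⟨a, ha⟩
  · simpa using hT
  exact ⟨Real.sInf_nonneg fun b hb => (hA hb).1,
    (csInf_le ⟨0, fun b hb => (hA hb).1⟩ ha).trans (hA ha).2⟩

namespace Soft

open Real

variable {T : ℝ} {l : ℝ → ℝ} {u x : ℝ → Sd} {j : Sd}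

lemma sval_mem_Icc (k : Sd) : sval k ∈ Icc (0 : ℝ) 1 := by
  unfold sval
  split_ifs
  · simp
  · exact ⟨by positivity, div_le_one_of_le₀ (by simp) (by positivity)⟩

lemma sdist_le_one (k j : Sd) : sdist k j ≤ 1 := by
  have hk := sval_mem_Icc k
  have hj := sval_mem_Icc j
  exact abs_sub_le_iff.2 ⟨by linarith [hk.2, hj.1], by linarith [hk.1, hj.2]⟩

lemma sdist_comm (k j : Sd) : sdist k j = sdist j k := abs_sub_comm _ _

lemma one_div_sq_le_sdist {m a b : ℕ} (hb : b ≤ m) (hab : a < b) :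
    1 / ((m : ℝ) + 1) ^ 2 ≤ sdist a b := by
  have hab' : (a : ℝ) + 1 ≤ b := by exact_mod_cast hab
  have hbm : (b : ℝ) ≤ m := by exact_mod_cast hb
  have hdiff : 1 / ((a : ℝ) + 1) - 1 / ((b : ℝ) + 1) = (b - a) / ((a + 1) * (b + 1)) := by
    field_simp
    ring
  simp only [sdist, sval, ENat.natCast_ne_top, if_false, ENat.toNat_natCast]
  rw [hdiff, abs_of_nonneg (by apply div_nonneg <;> [linarith; positivity])]
  apply div_le_div₀ (by linarith) (by linarith) (by positivity)
  nlinarith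

lemma eq_of_sdist_lt {m : ℕ} {k j : Sd} (hk : k ≤ m) (hj : j ≤ m)
    (h : sdist k j < 1 / ((m : ℝ) + 1) ^ 2) : k = j := by
  lift k to ℕ using ne_top_of_le_ne_top (ENat.natCast_ne_top m) hk
  lift j to ℕ using ne_top_of_le_ne_top (ENat.natCast_ne_top m) hj
  norm_cast at hk hj ⊢
  by_contra hne
  rcases lt_or_gt_of_ne hne with hlt | hlt
  · exact (one_div_sq_le_sdist hj hlt).not_gt h
  · exact (one_div_sq_le_sdist hk hlt).not_gt (sdist_comm (k : Sd) j ▸ h)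

lemma entryPoints_congr {v : ℝ → Sd} (h : EqOn u v (Icc 0 T)) :
    entryPoints T j u = entryPoints T j v := by
  ext t
  simp only [entryPoints, mem_ofPred_eq]
  refine and_congr_right fun ht => ?_
  rw [h ht]
  exact and_congr_right fun _ => or_congr_right <| forall₂_congr fun _ _ =>
    exists_congr fun s => and_congr_right fun hs => by rw [h hs.2]

lemma Nvisits_congr {v : ℝ → Sd} (h : EqOn u v (Icc 0 T)) : Nvisits T j u = Nvisits T j v := by
  rw [Nvisits, Nvisits, entryPoints_congr h]

lemma exitTime_congr {v : ℝ → Sd} (h : EqOn u v (Icc 0 T)) {t : ℝ} (ht : 0 ≤ t) :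
    exitTime T j u t = exitTime T j v t := by
  have hset : {s | s ∈ Ioc t T ∧ u s ≠ j} = {s | s ∈ Ioc t T ∧ v s ≠ j} := by
    ext s
    exact and_congr_right fun hs => by rw [h ⟨ht.trans hs.1.le, hs.2⟩]
  rw [exitTime, exitTime, hset]

lemma nthEntry_mem_Icc (hT : 0 ≤ T) {k : ℕ} : nthEntry T j x k ∈ Icc 0 T :=
  Real.sInf_mem_Icc_of_subset hT fun _ he => he.1.1

lemma exitTime_mem_Icc {t : ℝ} (ht : t ≤ T) : exitTime T j x t ∈ Icc t T := by
  have hTmem : T ∈ {s | s ∈ Ioc t T ∧ x s ≠ j} ∪ {T} := Or.inr rfl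
  refine ⟨le_csInf ⟨T, hTmem⟩ ?_, csInf_le ⟨t, ?_⟩ hTmem⟩ <;>
    rintro s (hs | rfl)
  exacts [hs.1.1.le, ht, hs.1.1.le, ht]

lemma holdingTime_congr (hT : 0 ≤ T) {v : ℝ → Sd} (h : EqOn u v (Icc 0 T)) (k : ℕ) :
    holdingTime T j u k = holdingTime T j v k := by
  have hentry : nthEntry T j u = nthEntry T j v := by
    funext k
    rw [nthEntry, nthEntry, entryPoints_congr h]
  rw [holdingTime, holdingTime, Nvisits_congr h, hentry,
    exitTime_congr h (nthEntry_mem_Icc hT).1]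

namespace TimeChange

lemma map_zero (hl : TimeChange T l) : l 0 = 0 := hl.1

lemma map_right (hl : TimeChange T l) : l T = T := hl.2.1

protected lemma continuousOn (hl : TimeChange T l) : ContinuousOn l (Icc 0 T) := hl.2.2.1

protected lemma strictMonoOn (hl : TimeChange T l) : StrictMonoOn l (Icc 0 T) := hl.2.2.2.1

protected lemma mapsTo (hl : TimeChange T l) : MapsTo l (Icc 0 T) (Icc 0 T) := hl.2.2.2.2

protected lemma id (T : ℝ) : TimeChange T id :=
  ⟨rfl, rfl, continuousOn_id, strictMonoOn_id, mapsTo_id _⟩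

lemma image_Icc (hT : 0 ≤ T) (hl : TimeChange T l) : l '' Icc 0 T = Icc 0 T := by
  rw [hl.continuousOn.image_Icc_of_monotoneOn hT hl.strictMonoOn.monotoneOn, hl.map_zero,
    hl.map_right]

lemma image_Ioo (hl : TimeChange T l) {a b : ℝ} (ha : 0 ≤ a) (hab : a ≤ b) (hb : b ≤ T) :
    l '' Ioo a b = Ioo (l a) (l b) :=
  (hl.continuousOn.mono (Icc_subset_Icc ha hb)).image_Ioo_of_strictMonoOn hab
    (hl.strictMonoOn.mono (Icc_subset_Icc ha hb))

lemma image_Ioc (hl : TimeChange T l) {a b : ℝ} (ha : 0 ≤ a) (hab : a ≤ b) (hb : b ≤ T) :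
    l '' Ioc a b = Ioc (l a) (l b) :=
  (hl.continuousOn.mono (Icc_subset_Icc ha hb)).image_Ioc_of_strictMonoOn hab
    (hl.strictMonoOn.mono (Icc_subset_Icc ha hb))

lemma map_sInf (hT : 0 ≤ T) (hl : TimeChange T l) {A : Set ℝ} (hA : A ⊆ Icc 0 T) :
    l (sInf A) = sInf (l '' A) := by
  rcases A.eq_empty_or_nonempty with rfl | hne
  · simp [hl.map_zero]
  exact MonotoneOn.map_csInf_of_continuousWithinAt
    ((hl.continuousOn _ (Real.sInf_mem_Icc_of_subset hT hA)).mono hA)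
    (hl.strictMonoOn.monotoneOn.mono hA) hne ⟨0, fun a ha => (hA ha).1⟩

lemma forall_exists_mem_Ioo_comp_iff (hT : 0 ≤ T) (hl : TimeChange T l) {Q : ℝ → Prop} {t : ℝ}
    (ht : t ∈ Icc 0 T) :
    (∀ a ∈ Icc 0 T, a < t → ∃ s ∈ Ioo a t, Q (l s)) ↔
      ∀ a ∈ Icc 0 T, a < l t → ∃ s ∈ Ioo a (l t), Q s := by
  constructor
  · intro h a' ha' hlt
    rw [← hl.image_Icc hT] at ha'
    obtain ⟨a, ha, rfl⟩ := ha'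
    have hat : a < t := (hl.strictMonoOn.lt_iff_lt ha ht).1 hlt
    obtain ⟨s, hs, hQ⟩ := h a ha hat
    exact ⟨l s, hl.image_Ioo ha.1 hat.le ht.2 ▸ mem_image_of_mem l hs, hQ⟩
  · intro h a ha hat
    obtain ⟨s', hs', hQ⟩ := h (l a) (hl.mapsTo ha) (hl.strictMonoOn ha ht hat)
    rw [← hl.image_Ioo ha.1 hat.le ht.2] at hs'
    obtain ⟨s, hs, rfl⟩ := hs'
    exact ⟨s, hs, hQ⟩

lemma mem_entryPoints_comp_iff (hT : 0 ≤ T) (hl : TimeChange T l) {t : ℝ} (ht : t ∈ Icc 0 T) :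
    t ∈ entryPoints T j (x ∘ l) ↔ l t ∈ entryPoints T j x := by
  simp only [entryPoints, mem_ofPred_eq, ht, hl.mapsTo ht, true_and, Function.comp_apply]
  refine and_congr_right fun _ => ?_
  rcases ht.1.eq_or_lt with rfl | ht0
  · simp [hl.map_zero]
  have hlt0 : 0 < l t := hl.map_zero ▸ hl.strictMonoOn ⟨le_rfl, hT⟩ ht ht0
  rw [forall_pos_exists_mem_Ioo_inter_Icc_iff ⟨ht0, ht.2⟩,
    forall_pos_exists_mem_Ioo_inter_Icc_iff ⟨hlt0, (hl.mapsTo ht).2⟩,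
    hl.forall_exists_mem_Ioo_comp_iff hT ht (Q := fun s => x s ≠ j)]
  simp only [ht0.ne', hlt0.ne', false_or]

lemma image_entryPoints_comp (hT : 0 ≤ T) (hl : TimeChange T l) :
    l '' entryPoints T j (x ∘ l) = entryPoints T j x := by
  ext t'
  constructor
  · rintro ⟨t, ht, rfl⟩
    exact (hl.mem_entryPoints_comp_iff hT ht.1).1 ht
  · intro ht'
    have ht'' := ht'.1
    rw [← hl.image_Icc hT] at ht''
    obtain ⟨t, ht, rfl⟩ := ht''
    exact ⟨t, (hl.mem_entryPoints_comp_iff hT ht).2 ht', rfl⟩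

lemma strictMonoOn_entryPoints (hl : TimeChange T l) : StrictMonoOn l (entryPoints T j x) :=
  hl.strictMonoOn.mono fun _ h => h.1

lemma Nvisits_comp (hT : 0 ≤ T) (hl : TimeChange T l) :
    Nvisits T j (x ∘ l) = Nvisits T j x := by
  rw [Nvisits, Nvisits, ← hl.image_entryPoints_comp hT (x := x),
    hl.strictMonoOn_entryPoints.injOn.ncard_image]

lemma nthEntry_comp (hT : 0 ≤ T) (hl : TimeChange T l) (k : ℕ) :
    nthEntry T j x k = l (nthEntry T j (x ∘ l) k) := by
  rw [nthEntry, nthEntry, ← hl.image_entryPoints_comp hT (x := x),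
    ← hl.strictMonoOn_entryPoints.image_setOf_ncard_lt, hl.map_sInf hT fun e he => he.1.1]

lemma exitTime_comp (hl : TimeChange T l) {t : ℝ} (ht : t ∈ Icc 0 T) :
    exitTime T j x (l t) = l (exitTime T j (x ∘ l) t) := by
  have hsub : {s | s ∈ Ioc t T ∧ (x ∘ l) s ≠ j} ∪ {T} ⊆ Icc 0 T := by
    rintro s (hs | rfl)
    · exact ⟨ht.1.trans hs.1.1.le, hs.1.2⟩
    · exact ⟨ht.1.trans ht.2, le_rfl⟩
  have hsep : {s | s ∈ Ioc t T ∧ (x ∘ l) s ≠ j} = Ioc t T ∩ l ⁻¹' {s | x s ≠ j} := rfl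
  rw [exitTime, exitTime, hl.map_sInf (ht.1.trans ht.2) hsub, image_union, image_singleton,
    hsep, image_inter_preimage, hl.image_Ioc ht.1 ht.2 le_rfl, hl.map_right]
  rfl

lemma exp_neg_mul_holdingTime_comp_le (hT : 0 ≤ T) (hl : TimeChange T l) {ε : ℝ}
    (hslope : ∀ s ∈ Icc 0 T, ∀ t ∈ Icc 0 T, s < t → |log ((l t - l s) / (t - s))| ≤ ε)
    (k : ℕ) : exp (-ε) * holdingTime T j (x ∘ l) k ≤ holdingTime T j x k := by
  rw [holdingTime, holdingTime, hl.Nvisits_comp hT]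
  split_ifs
  · rw [hl.nthEntry_comp hT (x := x), hl.exitTime_comp (x := x) (nthEntry_mem_Icc hT)]
    set e := nthEntry T j (x ∘ l) (k - 1)
    have he : e ∈ Icc 0 T := nthEntry_mem_Icc hT
    have hf : exitTime T j (x ∘ l) e ∈ Icc e T := exitTime_mem_Icc he.2
    rcases hf.1.eq_or_lt with hef | hef
    · rw [← hef]
      simp
    · have hf' : exitTime T j (x ∘ l) e ∈ Icc 0 T := ⟨he.1.trans hf.1, hf.2⟩
      exact exp_neg_mul_sub_le_of_abs_log_le hef (hl.strictMonoOn he hf' hef)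
        (hslope e he _ hf' hef)
  · simp

end TimeChange

lemma exists_timeChange_eqOn_comp {m : ℕ} (hu : ∀ t ∈ Icc 0 T, u t ≤ m)
    (hx : ∀ t ∈ Icc 0 T, x t ≤ m) {ε : ℝ} (hd : dS T u x < min ε (1 / ((m : ℝ) + 1) ^ 2)) :
    ∃ l, TimeChange T l ∧ EqOn u (x ∘ l) (Icc 0 T) ∧
      ∀ s ∈ Icc 0 T, ∀ t ∈ Icc 0 T, s < t → |log ((l t - l s) / (t - s))| ≤ ε := by
  have hne : {a : ℝ | ∃ l, TimeChange T l ∧ (∀ t ∈ Icc 0 T, sdist (u t) (x (l t)) ≤ a) ∧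
      ∀ s ∈ Icc 0 T, ∀ t ∈ Icc 0 T, s < t → |log ((l t - l s) / (t - s))| ≤ a}.Nonempty :=
    ⟨1, id, TimeChange.id T, fun _ _ => sdist_le_one _ _,
      fun s _ t _ hst => by simp [div_self (sub_pos.2 hst).ne']⟩
  obtain ⟨a, ⟨l, hl, hdist, hslope⟩, ha⟩ := exists_lt_of_csInf_lt hne hd
  exact ⟨l, hl,
    fun t ht => eq_of_sdist_lt (hu t ht) (hx _ (hl.mapsTo ht))
      ((hdist t ht).trans_lt (ha.trans_le (min_le_right _ _))),
    fun s hs t ht hst => (hslope s hs t ht hst).trans (ha.le.trans (min_le_left _ _))⟩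

end Soft

open Soft Filter Topology in
/-- On `D([0,T], S_m)` with the Skorohod metric, the number-of-visits functionals `N_k`
are continuous, and the sets `{x : T_{j,l}(x) ≥ a}` (`a > 0`) are closed. -/
theorem stmt19 (T : ℝ) (hT : 0 < T) (m : ℕ) :
    (∀ k : ℕ, k ≤ m → ∀ (u : ℕ → ℝ → Soft.Sd) (x : ℝ → Soft.Sd),
      (∀ n, Soft.memD T m (u n)) → Soft.memD T m x →
      Filter.Tendsto (fun n => Soft.dS T (u n) x) Filter.atTop (𝓝 0) →
      Filter.Tendsto (fun n => Soft.Nvisits T (k : Soft.Sd) (u n)) Filter.atTop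
        (𝓝 (Soft.Nvisits T (k : Soft.Sd) x))) ∧
    (∀ j : ℕ, j ≤ m → ∀ l : ℕ, 1 ≤ l → ∀ a : ℝ, 0 < a →
      ∀ (u : ℕ → ℝ → Soft.Sd) (x : ℝ → Soft.Sd),
      (∀ n, Soft.memD T m (u n)) → Soft.memD T m x →
      Filter.Tendsto (fun n => Soft.dS T (u n) x) Filter.atTop (𝓝 0) →
      (∀ n, a ≤ Soft.holdingTime T (j : Soft.Sd) (u n) l) →
      a ≤ Soft.holdingTime T (j : Soft.Sd) x l) := by
  have hsep : (0 : ℝ) < 1 / ((m : ℝ) + 1) ^ 2 := by positivity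
  constructor
  · intro k _ u x hu hx hconv
    refine tendsto_const_nhds.congr' ?_
    filter_upwards [hconv.eventually_lt_const (lt_min one_pos hsep)] with n hn
    obtain ⟨l, hl, heq, -⟩ := exists_timeChange_eqOn_comp (hu n).1 hx.1 hn
    rw [Nvisits_congr heq, hl.Nvisits_comp hT.le]
  · intro j _ k _ a _ u x hu hx hconv hle
    refine Real.le_of_forall_pos_exp_neg_mul_le fun ε hε => ?_
    obtain ⟨n, hn⟩ := (hconv.eventually_lt_const (lt_min hε hsep)).exists
    obtain ⟨l, hl, heq, hslope⟩ := exists_timeChange_eqOn_comp (hu n).1 hx.1 hn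
    calc Real.exp (-ε) * a ≤ Real.exp (-ε) * holdingTime T j (u n) k := by gcongr; exact hle n
      _ = Real.exp (-ε) * holdingTime T j (x ∘ l) k := by rw [holdingTime_congr hT.le heq]
      _ ≤ holdingTime T j x k := hl.exp_neg_mul_holdingTime_comp_le hT.le hslope k
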